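/- arXiv:2303.03485 — 4 statements merged into one kernel-verified Lean document; each statement's English description precedes it below -/
import Mathlib

section
/- Let d ≥ 2, r ≥ 1 and m ≥ 1 be integers. Suppose there exist positive integers n_1, …, n_d and a nonzero polynomial f of degree m in ℂ[x_{i_1,…,i_d} : i_j ∈ [n_j]] that vanishes on all tensors in ℂ^{n_1} ⊗ ⋯ ⊗ ℂ^{n_d} of partition rank at most r. Then there exists a nonzero polynomial g of degree m in ℂ[x_{i_1,…,i_d} : i_1, …, i_d ∈ [m]] vanishing on all tensors in ℂ^m ⊗ ⋯ ⊗ ℂ^m of partition rank at most r, such that g has integer coefficients whose greatest common divisor is 1, and g has weight (1^m, …, 1^m): for every position k ∈ [d] and every index value j ∈ [m], every monomial of g has total degree exactly 1 in the variables {x_{i_1,…,i_d} : i_k = j}. -/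
open scoped BigOperators

/-- `T` is a single term `A ⊗ B` of a partition rank decomposition. -/
def IsPartitionTerm {K : Type*} [Field K] {d : ℕ} {n : Fin d → ℕ}
    (T : (∀ i, Fin (n i)) → K) : Prop :=
  ∃ I : Finset (Fin d), I.Nonempty ∧ I ≠ Finset.univ ∧
    ∃ (A : (∀ i : {i : Fin d // i ∈ I}, Fin (n i)) → K)
      (B : (∀ i : {i : Fin d // i ∉ I}, Fin (n i)) → K),
      ∀ x, T x = A (fun i => x i) * B (fun i => x i)

/-- The partition rank of `T` is at most `r`. -/
def PartRankLE {K : Type*} [Field K] {d : ℕ} {n : Fin d → ℕ}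
    (T : (∀ i, Fin (n i)) → K) (r : ℕ) : Prop :=
  ∃ c : Fin r → ((∀ i, Fin (n i)) → K),
    (∀ j, IsPartitionTerm (c j)) ∧ T = ∑ j, c j

/-!
Substitute `x_i ↦ ∑_v X_v ∏_k (L_k)_{v_k, i_k}`, i.e. evaluate `f` at the image of a tensor
`X ∈ (K^m)^{⊗d}` under generic matrices `L_k ∈ K^{m × n_k}`. Multilinear maps do not increase
partition rank, so every coefficient (a polynomial in `X`) of this polynomial in the entries of the
`L_k` vanishes on tensors of partition rank at most `r`. Take the coefficient `g` of
`∏_c ∏_k (L_k)_{c, (i_c)_k}`, where `x_{i_1} ⋯ x_{i_m}` is a monomial of top degree of `f`. It has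
weight `(1^m, …, 1^m)` because the substitution is balanced for the grading counting slices, and
it is nonzero because at the diagonal tensor `X = ∑_c e_c ⊗ ⋯ ⊗ e_c` it equals a positive multiple
of the coefficient of `x_{i_1} ⋯ x_{i_m}` in `f`.

Vanishing on tensors of partition rank at most `r` is a polynomial identity with rational
coefficients in the parameters of a decomposition. Applying a `ℚ`-linear functional `ℂ → ℚ` to the
coefficients of `g` therefore gives a nonzero rational solution whose support lies in that of `g`;
clearing denominators and the content makes it a primitive integer polynomial.
-/

open MvPolynomial

section Contraction

variable {R : Type*} [CommSemiring R] {κ : Type*} [Fintype κ] [DecidableEq κ]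
  {α α' : κ → Type*} [∀ k, Fintype (α' k)]

def contract (L : ∀ k, α' k → α k → R) (T : (∀ k, α' k) → R) : (∀ k, α k) → R :=
  fun i => ∑ v, T v * ∏ k, L k (v k) (i k)

lemma contract_sum {ι : Type*} (s : Finset ι) (L : ∀ k, α' k → α k → R)
    (T : ι → (∀ k, α' k) → R) : contract L (∑ j ∈ s, T j) = ∑ j ∈ s, contract L (T j) := by
  ext i
  simp only [contract, Finset.sum_apply, Finset.sum_mul]
  exact Finset.sum_comm

lemma contract_mul_of_piSubtype (p : κ → Prop) [DecidablePred p] (L : ∀ k, α' k → α k → R)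
    (A : (∀ k : {k // p k}, α' k) → R) (B : (∀ k : {k // ¬p k}, α' k) → R) (i : ∀ k, α k) :
    contract L (fun v => A (fun k => v k) * B (fun k => v k)) i =
      contract (fun k : {k // p k} => L k) A (fun k => i k) *
        contract (fun k : {k // ¬p k} => L k) B (fun k => i k) := by
  simp only [contract, Finset.sum_mul_sum, ← Fintype.sum_prod_type']
  rw [← (Equiv.piEquivPiSubtypeProd p α').sum_comp]
  refine Fintype.sum_congr _ _ fun v => ?_
  rw [← Fintype.prod_subtype_mul_prod_subtype p]
  simp only [Equiv.piEquivPiSubtypeProd_apply]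
  ring

end Contraction

section PartitionRank

variable {K : Type*} [Field K] {d : ℕ} {n n' : Fin d → ℕ}

lemma IsPartitionTerm.contract {T : (∀ k, Fin (n' k)) → K} (hT : IsPartitionTerm T)
    (L : ∀ k, Fin (n' k) → Fin (n k) → K) : IsPartitionTerm (contract L T) := by
  obtain ⟨I, hI, hIu, A, B, hAB⟩ := hT
  refine ⟨I, hI, hIu, _root_.contract (fun k : I => L k) A,
    _root_.contract (fun k : {k // k ∉ I} => L k) B, fun i => ?_⟩
  rw [funext hAB]
  -- `convert` only reconciles two `Fintype` instances on `↥I`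
  convert contract_mul_of_piSubtype (· ∈ I) L A B i

lemma PartRankLE.contract {T : (∀ k, Fin (n' k)) → K} {r : ℕ} (hT : PartRankLE T r)
    (L : ∀ k, Fin (n' k) → Fin (n k) → K) : PartRankLE (contract L T) r := by
  obtain ⟨c, hc, rfl⟩ := hT
  exact ⟨fun j => _root_.contract L (c j), fun j => (hc j).contract L, contract_sum _ _ _⟩

end PartitionRank

abbrev PartitionShape (d : ℕ) := {I : Finset (Fin d) // I.Nonempty ∧ I ≠ Finset.univ}

/-- The parameters `A_j(a)` and `B_j(b)` of a decomposition `∑_j A_j ⊗ B_j` of shape `S`. -/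
abbrev GenericFactor {d r : ℕ} (n : Fin d → ℕ) (S : Fin r → PartitionShape d) :=
  Σ j : Fin r, (∀ k : {k // k ∈ (S j).1}, Fin (n k)) ⊕ (∀ k : {k // k ∉ (S j).1}, Fin (n k))

noncomputable def genericTensor {d r : ℕ} {n : Fin d → ℕ} (S : Fin r → PartitionShape d)
    (v : ∀ k, Fin (n k)) : MvPolynomial (GenericFactor n S) ℚ :=
  ∑ j, X ⟨j, .inl fun k => v k⟩ * X ⟨j, .inr fun k => v k⟩

lemma partRankLE_iff_exists_genericTensor {K : Type*} [Field K] [Algebra ℚ K] {d r : ℕ}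
    {n : Fin d → ℕ} {T : (∀ k, Fin (n k)) → K} :
    PartRankLE T r ↔ ∃ (S : Fin r → PartitionShape d) (θ : GenericFactor n S → K),
      T = fun v => aeval θ (genericTensor S v) := by
  constructor
  · rintro ⟨c, hc, rfl⟩
    choose I hI hIu A B hAB using hc
    refine ⟨fun j => ⟨I j, hI j, hIu j⟩, fun | ⟨j, .inl a⟩ => A j a | ⟨j, .inr b⟩ => B j b, ?_⟩
    ext v
    simp [genericTensor, hAB]
  · rintro ⟨S, θ, rfl⟩
    refine ⟨fun j v => θ ⟨j, .inl fun k => v k⟩ * θ ⟨j, .inr fun k => v k⟩,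
      fun j => ⟨(S j).1, (S j).2.1, (S j).2.2, fun a => θ ⟨j, .inl a⟩, fun b => θ ⟨j, .inr b⟩,
        fun v => rfl⟩, ?_⟩
    ext v
    simp [genericTensor]

namespace MvPolynomial

variable {σ : Type*}

theorem exists_map_intCast_eq_smul (h : MvPolynomial σ ℚ) :
    ∃ b : ℤ, b ≠ 0 ∧ ∃ g : MvPolynomial σ ℤ, map (Int.castRingHom ℚ) g = (b : ℚ) • h := by
  obtain ⟨⟨b, hb⟩, hint⟩ :=
    IsLocalization.exist_integer_multiples (nonZeroDivisors ℤ) h.support (coeff · h)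
  refine ⟨b, nonZeroDivisors.ne_zero hb, mem_range_map_iff_coeffs_subset.mpr ?_⟩
  intro a ha
  obtain ⟨μ, hμ, rfl⟩ := mem_coeffs_iff.mp ha
  obtain ⟨z, hz⟩ := hint μ (support_smul hμ)
  exact ⟨z, by simpa [zsmul_eq_mul] using hz⟩

theorem exists_eq_C_mul_gcd_coeff_eq_one {R : Type*} [CommRing R] [IsDomain R]
    [StrongNormalizedGCDMonoid R] (p : MvPolynomial σ R) (hp : p ≠ 0) :
    ∃ q : MvPolynomial σ R, p = C (p.support.gcd fun μ => p.coeff μ) * q ∧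
      q.support.gcd (fun μ => q.coeff μ) = 1 := by
  set G := p.support.gcd fun μ => p.coeff μ
  obtain ⟨q, hq⟩ := (C_dvd_iff_dvd_coeff G p).mpr fun μ => by
    by_cases hμ : μ ∈ p.support
    · exact Finset.gcd_dvd (f := fun μ => p.coeff μ) hμ
    · simp [notMem_support_iff.mp hμ]
  refine ⟨q, hq, ?_⟩
  have hG : G ≠ 0 := fun h0 => hp (by rw [hq, h0, C_0, zero_mul])
  have hsupp : p.support = q.support := by
    rw [hq, ← smul_eq_C_mul, support_smul_eq hG]
  refine (mul_right_eq_self₀.mp ?_).resolve_right hG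
  calc G * q.support.gcd (fun μ => q.coeff μ)
      = normalize G * q.support.gcd (fun μ => q.coeff μ) := by rw [Finset.normalize_gcd]
    _ = q.support.gcd (fun μ => G * q.coeff μ) := Finset.gcd_mul_left.symm
    _ = G := by
      rw [← hsupp]
      exact Finset.gcd_congr rfl fun μ _ => by rw [hq, coeff_C_mul]

theorem exists_descent_of_eval_eq_zero {K L σ ι : Type*} {τ : ι → Type*} [Field K] [Field L]
    [Algebra K L] [Infinite L] (P : ∀ i, σ → MvPolynomial (τ i) K) {g : MvPolynomial σ L}
    (hg : g ≠ 0) (hvan : ∀ i (θ : τ i → L), eval (fun s => aeval θ (P i s)) g = 0) :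
    ∃ h : MvPolynomial σ K, h ≠ 0 ∧ h.support ⊆ g.support ∧
      ∀ i (θ : τ i → L), aeval (fun s => aeval θ (P i s)) h = 0 := by
  classical
  obtain ⟨μ₀, hμ₀⟩ := support_nonempty.mpr hg
  obtain ⟨ℓ, hℓ⟩ := Module.Projective.exists_dual_ne_zero K (mem_support_iff.mp hμ₀)
  set h : MvPolynomial σ K := ∑ μ ∈ g.support, monomial μ (ℓ (g.coeff μ))
  have hcoeff : ∀ μ, h.coeff μ = ℓ (g.coeff μ) := fun μ => by
    by_cases hμ : μ ∈ g.support
    · simp [h, coeff_sum, coeff_monomial, hμ]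
    · simp [h, coeff_sum, coeff_monomial, hμ, notMem_support_iff.mp hμ]
  have hbind : ∀ i t, (bind₁ (P i) h).coeff t =
      ℓ ((bind₁ (fun s => map (algebraMap K L) (P i s)) g).coeff t) := fun i t => by
    conv_rhs => rw [g.as_sum]
    simp only [h, map_sum, bind₁_monomial, coeff_sum, ← map_pow, ← map_prod, coeff_C_mul,
      coeff_map]
    refine Finset.sum_congr rfl fun μ _ => ?_
    rw [← Algebra.commutes, ← Algebra.smul_def, map_smul, smul_eq_mul, mul_comm]
  refine ⟨h, fun h0 => hℓ (by rw [← hcoeff, h0, coeff_zero]), ?_, fun i θ => ?_⟩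
  · intro μ hμ
    by_contra hg'
    exact mem_support_iff.mp hμ (by rw [hcoeff, notMem_support_iff.mp hg', map_zero])
  · have hzero : bind₁ (fun s => map (algebraMap K L) (P i s)) g = 0 := by
      refine MvPolynomial.funext fun θ => ?_
      rw [map_zero, ← aeval_eq_eval, aeval_bind₁]
      simpa [aeval_def, eval_map] using hvan i θ
    have : bind₁ (P i) h = 0 := by
      ext t
      rw [hbind, hzero, coeff_zero, map_zero, coeff_zero]
    rw [← aeval_bind₁, this, map_zero]

theorem exists_map_intCast_eq_smul_gcd_coeff_eq_one {h : MvPolynomial σ ℚ} (hh : h ≠ 0) :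
    ∃ (g₀ : MvPolynomial σ ℤ) (c : ℚ), c ≠ 0 ∧ map (Int.castRingHom ℚ) g₀ = c • h ∧
      g₀.support.gcd (fun μ => g₀.coeff μ) = 1 := by
  obtain ⟨b, hb, g₁, hg₁⟩ := exists_map_intCast_eq_smul h
  have hg₁0 : g₁ ≠ 0 := by
    rintro rfl
    rw [map_zero, eq_comm, smul_eq_zero] at hg₁
    exact hg₁.elim (by exact_mod_cast hb) hh
  obtain ⟨g₀, hg₀, hgcd⟩ := exists_eq_C_mul_gcd_coeff_eq_one g₁ hg₁0
  set G := g₁.support.gcd fun μ => g₁.coeff μ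
  have hG : G ≠ 0 := fun h0 => hg₁0 (by rw [hg₀, h0, C_0, zero_mul])
  refine ⟨g₀, b / G, div_ne_zero (by exact_mod_cast hb) (by exact_mod_cast hG), ?_, hgcd⟩
  rw [div_eq_inv_mul, mul_smul, ← hg₁, hg₀, map_mul, map_C, ← smul_eq_C_mul, smul_smul]
  simp [hG]

theorem exists_primitive_int_of_eval_eq_zero {L ι : Type*} {τ : ι → Type*} [Field L]
    [CharZero L] (P : ∀ i, σ → MvPolynomial (τ i) ℚ) {g : MvPolynomial σ L} (hg : g ≠ 0)
    (hvan : ∀ i (θ : τ i → L), eval (fun s => aeval θ (P i s)) g = 0) :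
    ∃ g₀ : MvPolynomial σ ℤ, g₀ ≠ 0 ∧ g₀.support ⊆ g.support ∧
      g₀.support.gcd (fun μ => g₀.coeff μ) = 1 ∧
      ∀ i (θ : τ i → L), eval (fun s => aeval θ (P i s)) (map (Int.castRingHom L) g₀) = 0 := by
  obtain ⟨h, hh, hsupp, hhvan⟩ := exists_descent_of_eval_eq_zero P hg hvan
  obtain ⟨g₀, c, hc, hg₀, hgcd⟩ := exists_map_intCast_eq_smul_gcd_coeff_eq_one hh
  have hsupp₀ : g₀.support = h.support := by
    rw [← support_map_of_injective g₀ (Int.castRingHom ℚ).injective_int, hg₀,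
      support_smul_eq hc]
  refine ⟨g₀, fun h0 => hh ?_, hsupp₀ ▸ hsupp, hgcd, fun i θ => ?_⟩
  · rwa [h0, map_zero, eq_comm, smul_eq_zero, or_iff_right hc] at hg₀
  · rw [eval_map, ← algebraMap_int_eq, ← aeval_def, ← aeval_map_algebraMap ℚ, algebraMap_int_eq,
      hg₀, map_smul, hhvan, smul_zero]

variable {τ R M : Type*} [CommSemiring R] [AddCommMonoid M]

def balancedSubsemiring (wX : σ → M) (wY : τ → M) :
    Subsemiring (MvPolynomial τ (MvPolynomial σ R)) where
  carrier := {P | ∀ ρ, IsWeightedHomogeneous wX (P.coeff ρ) (Finsupp.weight wY ρ)}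
  mul_mem' {P Q} hP hQ ρ := by
    classical
    rw [coeff_mul]
    refine IsWeightedHomogeneous.sum _ _ _ fun x hx => ?_
    rw [← Finset.HasAntidiagonal.mem_antidiagonal.mp hx, map_add]
    exact (hP _).mul (hQ _)
  one_mem' ρ := by
    classical
    rw [coeff_one]
    split_ifs with h
    · rw [← h, map_zero]
      exact isWeightedHomogeneous_one _ _
    · exact isWeightedHomogeneous_zero _ _ _
  add_mem' hP hQ ρ := by
    rw [coeff_add]
    exact (hP ρ).add (hQ ρ)
  zero_mem' ρ := isWeightedHomogeneous_zero _ _ _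

lemma monomial_monomial_mem_balancedSubsemiring {wX : σ → M} {wY : τ → M} {μ : σ →₀ ℕ}
    {ρ : τ →₀ ℕ} (h : Finsupp.weight wX μ = Finsupp.weight wY ρ) (a : R) :
    monomial ρ (monomial μ a) ∈ balancedSubsemiring wX wY := fun ρ' => by
  classical
  rw [coeff_monomial]
  split_ifs with hρ
  · exact isWeightedHomogeneous_monomial _ _ _ (hρ ▸ h)
  · exact isWeightedHomogeneous_zero _ _ _

end MvPolynomial

lemma Multiset.exists_fin_map_eq {α : Type*} {m : ℕ} (M : Multiset α) (hM : card M = m) :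
    ∃ seq : Fin m → α, Finset.univ.val.map seq = M := by
  obtain ⟨l, rfl⟩ : ∃ l : List α, (l : Multiset α) = M := Quot.exists_rep M
  rw [Multiset.coe_card] at hM
  subst hM
  exact ⟨l.get, by rw [Fin.univ_val_map, List.ofFn_get]⟩

section Substitution

variable {d : ℕ} {n : Fin d → ℕ} {m : ℕ}

/-- The entries `(L_k)_{c, a}` of `d` matrices `L_k ∈ K^{m × n_k}`. -/
abbrev MatrixEntry (n : Fin d → ℕ) (m : ℕ) := Σ k : Fin d, Fin m × Fin (n k)

noncomputable def entryExp (v : Fin d → Fin m) (i : ∀ k, Fin (n k)) : MatrixEntry n m →₀ ℕ :=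
  ∑ k, Finsupp.single ⟨k, (v k, i k)⟩ 1

lemma entryExp_apply (v : Fin d → Fin m) (i : ∀ k, Fin (n k)) (k : Fin d) (c : Fin m)
    (a : Fin (n k)) : entryExp v i ⟨k, (c, a)⟩ = if v k = c ∧ i k = a then 1 else 0 := by
  classical
  simp only [entryExp, Finsupp.finsetSum_apply, Finsupp.single_apply]
  rw [Finset.sum_eq_single k]
  · simp
  · intro k' _ hk
    simp [Sigma.ext_iff, hk]
  · simp

/-- The entry `i` of the image of `T` under the generic matrices `L_k`; for `T = X` this is the
substitution for `x_i`. -/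
noncomputable def contractionPoly {R : Type*} [CommSemiring R] (T : (Fin d → Fin m) → R)
    (i : ∀ k, Fin (n k)) : MvPolynomial (MatrixEntry n m) R :=
  ∑ v, monomial (entryExp v i) (T v)

variable {R S : Type*} [CommSemiring R] [CommSemiring S]

lemma eval_contractionPoly (T : (Fin d → Fin m) → R) (L : MatrixEntry n m → R)
    (i : ∀ k, Fin (n k)) :
    eval L (contractionPoly T i) = contract (fun k c a => L ⟨k, (c, a)⟩) T i := by
  simp [contractionPoly, contract, entryExp, monomial_sum_index, ← X_pow_eq_monomial]

lemma map_contractionPoly (φ : R →+* S) (T : (Fin d → Fin m) → R) (i : ∀ k, Fin (n k)) :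
    map φ (contractionPoly T i) = contractionPoly (φ ∘ T) i := by
  simp [contractionPoly]

def sliceWeight (v : Fin d → Fin m) : Fin d → Fin m → ℕ := fun k => Pi.single (v k) 1

def entryWeight (z : MatrixEntry n m) : Fin d → Fin m → ℕ := Pi.single z.1 (Pi.single z.2.1 1)

lemma weight_entryExp (v : Fin d → Fin m) (i : ∀ k, Fin (n k)) :
    Finsupp.weight entryWeight (entryExp v i) = sliceWeight v := by
  classical
  ext k j
  simp [entryExp, entryWeight, sliceWeight, map_sum, Finsupp.weight_single, Pi.single_apply,
    ite_apply]

variable {K : Type*} [Field K]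

lemma aeval_contractionPoly_X_mem_balancedSubsemiring (f : MvPolynomial (∀ k, Fin (n k)) K) :
    aeval (contractionPoly (X : (Fin d → Fin m) → MvPolynomial (Fin d → Fin m) K)) f ∈
      balancedSubsemiring sliceWeight entryWeight := by
  refine eval₂_mem (fun μ _ => ?_) fun i => Subsemiring.sum_mem _ fun v _ => ?_
  · rw [MvPolynomial.algebraMap_apply, algebraMap_eq, C_apply, C_apply]
    exact monomial_monomial_mem_balancedSubsemiring (by simp) _
  · exact monomial_monomial_mem_balancedSubsemiring
      (by rw [weight_entryExp, Finsupp.weight_single, one_smul]) _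

lemma map_eval_aeval_contractionPoly_X (T : (Fin d → Fin m) → K)
    (f : MvPolynomial (∀ k, Fin (n k)) K) :
    map (eval T) (aeval (contractionPoly (X : (Fin d → Fin m) → MvPolynomial (Fin d → Fin m) K)) f)
      = aeval (contractionPoly T) f := by
  change mapAlgHom (aeval T) _ = _
  rw [comp_aeval_apply]
  simp [mapAlgHom_apply, map_contractionPoly, Function.comp_def]

def diagonalTensor (R : Type*) [Semiring R] : (Fin d → Fin m) → R :=
  fun v => ∑ c : Fin m, if v = (fun _ => c) then 1 else 0

lemma map_diagonalTensor (φ : R →+* S) :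
    φ ∘ diagonalTensor R = diagonalTensor (d := d) (m := m) S := by
  ext v
  simp [diagonalTensor]

lemma contractionPoly_diagonalTensor (i : ∀ k, Fin (n k)) :
    contractionPoly (diagonalTensor R) i = ∑ c : Fin m, monomial (entryExp (fun _ => c) i) 1 := by
  simp only [contractionPoly, diagonalTensor, map_sum, apply_ite (monomial _), map_zero]
  rw [Finset.sum_comm]
  simp

section Slices

variable (seq : Fin m → ∀ k, Fin (n k))

/-- The exponent of `∏_{c ∈ s} ∏_k (L_k)_{c, (seq c)_k}`. -/
noncomputable def sliceExp (s : Finset (Fin m)) : MatrixEntry n m →₀ ℕ :=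
  ∑ c ∈ s, entryExp (fun _ => c) (seq c)

variable {seq}

lemma sliceExp_apply (s : Finset (Fin m)) (k : Fin d) (c : Fin m) (a : Fin (n k)) :
    sliceExp seq s ⟨k, (c, a)⟩ = if c ∈ s ∧ seq c k = a then 1 else 0 := by
  simp [sliceExp, Finsupp.finsetSum_apply, entryExp_apply, ite_and]

lemma entryExp_le_sliceExp_iff (hd : 0 < d) {s : Finset (Fin m)} {c : Fin m}
    {i : ∀ k, Fin (n k)} : entryExp (fun _ => c) i ≤ sliceExp seq s ↔ c ∈ s ∧ i = seq c := by
  refine ⟨fun hle => ?_, fun ⟨hc, hi⟩ => hi ▸ Finset.single_le_sum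
    (f := fun c => entryExp (fun _ => c) (seq c)) (fun _ _ => zero_le) hc⟩
  have h k : c ∈ s ∧ seq c k = i k := by
    have := Finsupp.le_def.mp hle ⟨k, (c, i k)⟩
    rw [entryExp_apply, sliceExp_apply, if_pos ⟨rfl, rfl⟩] at this
    split_ifs at this with hk
    exacts [hk, absurd this (by norm_num)]
  exact ⟨(h ⟨0, hd⟩).1, funext fun k => (h k).2.symm⟩

lemma sliceExp_eq_zero_iff (hd : 0 < d) {s : Finset (Fin m)} : sliceExp seq s = 0 ↔ s = ∅ := by
  refine ⟨fun h => Finset.eq_empty_of_forall_notMem fun c hc => ?_, fun h => by simp [h, sliceExp]⟩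
  simpa [sliceExp_apply, hc] using DFunLike.congr_fun h ⟨⟨0, hd⟩, (c, seq c ⟨0, hd⟩)⟩

lemma sliceExp_sub_entryExp {s : Finset (Fin m)} {c : Fin m} (hc : c ∈ s) :
    sliceExp seq s - entryExp (fun _ => c) (seq c) = sliceExp seq (s.erase c) := by
  rw [sliceExp, ← Finset.sum_erase_add _ _ hc, add_tsub_cancel_right, sliceExp]

/-- Over `ℕ` nothing cancels: the coefficient counts the ways of matching the factors with the
slices `c ∈ s`. -/
lemma coeff_sliceExp_prod_ne_zero_iff (hd : 0 < d) (M : Multiset (∀ k, Fin (n k)))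
    (s : Finset (Fin m)) :
    coeff (sliceExp seq s) (M.map (contractionPoly (diagonalTensor ℕ))).prod ≠ 0 ↔
      s.val.map seq = M := by
  classical
  induction M using Multiset.induction_on generalizing s with
  | empty =>
    rw [Multiset.map_zero, Multiset.prod_zero, coeff_one, Multiset.map_eq_zero, Finset.val_eq_zero,
      ← sliceExp_eq_zero_iff hd (seq := seq)]
    split_ifs with h
    · simp [← h]
    · simpa [eq_comm] using h
  | cons i M ih =>
    rw [Multiset.map_cons, Multiset.prod_cons, contractionPoly_diagonalTensor, Finset.sum_mul,
      coeff_sum, ne_eq, Finset.sum_eq_zero_iff, ← Multiset.map_eq_cons]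
    simp only [Finset.mem_univ, true_imp_iff, not_forall, Finset.mem_val]
    refine exists_congr fun c => ?_
    rw [coeff_monomial_mul', one_mul]
    by_cases hle : entryExp (fun _ => c) i ≤ sliceExp seq s
    · obtain ⟨hc, rfl⟩ := (entryExp_le_sliceExp_iff hd).mp hle
      rw [if_pos hle, sliceExp_sub_entryExp hc, ← ne_eq, ih, ← Finset.erase_val]
      simp [hc]
    · rw [if_neg hle]
      simp only [not_true, false_iff, not_and]
      exact fun hc hi => absurd ((entryExp_le_sliceExp_iff hd).mpr ⟨hc, hi.symm⟩) hle

lemma coeff_sliceExp_aeval_diagonalTensor_ne_zero [CharZero K] (hd : 0 < d)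
    {f : MvPolynomial (∀ k, Fin (n k)) K} {μ : (∀ k, Fin (n k)) →₀ ℕ} (hμ : μ ∈ f.support)
    (hseq : Finset.univ.val.map seq = μ.toMultiset) :
    coeff (sliceExp seq Finset.univ) (aeval (contractionPoly (diagonalTensor K)) f) ≠ 0 := by
  have hprod (μ' : (∀ k, Fin (n k)) →₀ ℕ) :
      ∏ i ∈ μ'.support, contractionPoly (diagonalTensor (m := m) K) i ^ μ' i =
        map (Nat.castRingHom K) (μ'.toMultiset.map (contractionPoly (diagonalTensor ℕ))).prod := by
    rw [Finsupp.toMultiset_map, Finsupp.prod_toMultiset,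
      Finsupp.prod_mapDomain_index (fun _ => pow_zero _) (fun _ _ _ => pow_add _ _ _),
      Finsupp.prod, map_prod]
    simp only [map_pow, map_contractionPoly, map_diagonalTensor]
  rw [aeval_def, eval₂_eq, coeff_sum, Finset.sum_eq_single μ]
  · rw [hprod, algebraMap_eq, coeff_C_mul, coeff_map]
    refine mul_ne_zero (mem_support_iff.mp hμ) ?_
    simpa using (coeff_sliceExp_prod_ne_zero_iff hd _ _).mpr hseq
  · intro μ' _ hne
    rw [hprod, algebraMap_eq, coeff_C_mul, coeff_map]
    by_contra h
    have hN := (coeff_sliceExp_prod_ne_zero_iff hd μ'.toMultiset Finset.univ).mp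
      fun h0 => h (by rw [h0, map_zero, mul_zero])
    rw [← Finsupp.toMultiset_toFinsupp μ', ← hN, hseq, Finsupp.toMultiset_toFinsupp] at hne
    exact hne rfl
  · exact fun h => absurd hμ h

end Slices

lemma weight_sliceExp_univ (seq : Fin m → ∀ k, Fin (n k)) :
    Finsupp.weight entryWeight (sliceExp seq Finset.univ) = 1 := by
  ext k j
  simp [sliceExp, map_sum, weight_entryExp, sliceWeight, Finset.sum_apply, Pi.single_apply]

lemma weight_sliceWeight_apply (μ : (Fin d → Fin m) →₀ ℕ) (k : Fin d) (j : Fin m) :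
    Finsupp.weight sliceWeight μ k j = ∑ v ∈ Finset.univ.filter (fun v => v k = j), μ v := by
  simp [Finsupp.weight_eq_sum, sliceWeight, Finset.sum_apply, Pi.single_apply, Finset.sum_filter,
    eq_comm]

lemma isHomogeneous_of_isWeightedHomogeneous_sliceWeight (hd : 0 < d)
    {g : MvPolynomial (Fin d → Fin m) R} (hg : IsWeightedHomogeneous sliceWeight g 1) :
    g.IsHomogeneous m := fun μ hμ => by
  calc Finsupp.weight 1 μ = ∑ v, μ v := by simp [Finsupp.weight_eq_sum]
    _ = ∑ j : Fin m, Finsupp.weight sliceWeight μ ⟨0, hd⟩ j := by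
      simp only [weight_sliceWeight_apply, Finset.sum_fiberwise]
    _ = m := by simp [hg hμ]

theorem exists_isWeightedHomogeneous_vanishing [CharZero K] {r : ℕ} (hd : 0 < d)
    {f : MvPolynomial (∀ k, Fin (n k)) K} (hf : f ≠ 0) (hdeg : f.totalDegree = m)
    (hvan : ∀ T : (∀ k, Fin (n k)) → K, PartRankLE T r → eval T f = 0) :
    ∃ g : MvPolynomial (Fin d → Fin m) K, g ≠ 0 ∧
      (∀ T : (Fin d → Fin m) → K, PartRankLE (n := fun _ => m) T r → eval T g = 0) ∧
      IsWeightedHomogeneous sliceWeight g 1 := by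
  obtain ⟨μ, hμ, hμdeg⟩ := Finset.exists_mem_eq_sup f.support (support_nonempty.mpr hf)
    fun s => s.sum fun _ e => e
  obtain ⟨seq, hseq⟩ := μ.toMultiset.exists_fin_map_eq (m := m) (by
    rw [Finsupp.card_toMultiset, ← hdeg, totalDegree, hμdeg]; rfl)
  set F := aeval (contractionPoly (X : (Fin d → Fin m) → MvPolynomial (Fin d → Fin m) K)) f
  refine ⟨F.coeff (sliceExp seq Finset.univ), fun h0 => ?_, fun T hT => ?_, ?_⟩
  · apply coeff_sliceExp_aeval_diagonalTensor_ne_zero hd hμ hseq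
    rw [← map_eval_aeval_contractionPoly_X, coeff_map, h0, map_zero]
  · have hzero : aeval (contractionPoly T) f = 0 := MvPolynomial.funext fun L => by
      change aeval L _ = _
      have hL : (fun i => aeval L (contractionPoly T i)) =
          contract (fun k c a => L ⟨k, (c, a)⟩) T :=
        funext fun i => eval_contractionPoly T L i
      rw [comp_aeval_apply, map_zero, hL]
      exact hvan _ (hT.contract _)
    rw [← coeff_map, map_eval_aeval_contractionPoly_X, hzero, coeff_zero]
  · rw [← weight_sliceExp_univ seq]
    exact aeval_contractionPoly_X_mem_balancedSubsemiring f _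

end Substitution

theorem normalised_vanishing_polynomial_general
    (d r m : ℕ) (hd : 2 ≤ d)
    (hpoly : ∃ (n : Fin d → ℕ) (_ : ∀ i, 1 ≤ n i)
      (f : MvPolynomial (∀ i, Fin (n i)) ℂ), f ≠ 0 ∧ f.totalDegree = m ∧
        ∀ T : (∀ i, Fin (n i)) → ℂ, PartRankLE T r → MvPolynomial.eval T f = 0) :
    ∃ g : MvPolynomial (Fin d → Fin m) ℂ,
      g ≠ 0 ∧ g.totalDegree = m ∧
      (∀ T : (Fin d → Fin m) → ℂ, PartRankLE (n := fun _ => m) T r →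
        MvPolynomial.eval T g = 0) ∧
      (∃ g₀ : MvPolynomial (Fin d → Fin m) ℤ,
        g = MvPolynomial.map (Int.castRingHom ℂ) g₀ ∧
        Finset.gcd g₀.support (fun μ => g₀.coeff μ) = 1) ∧
      (∀ (k : Fin d) (j : Fin m), ∀ μ ∈ g.support,
        ∑ v ∈ Finset.univ.filter (fun v : Fin d → Fin m => v k = j), μ v = 1) := by
  obtain ⟨n, -, f, hf, hfdeg, hvan⟩ := hpoly
  obtain ⟨g, hg, hgvan, hgwt⟩ := exists_isWeightedHomogeneous_vanishing (by omega) hf hfdeg hvan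
  obtain ⟨g₀, hg₀, hsupp, hgcd, hvan₀⟩ :=
    exists_primitive_int_of_eval_eq_zero (genericTensor (n := fun _ => m)) hg
      fun S θ => hgvan _ (partRankLE_iff_exists_genericTensor.mpr ⟨S, θ, rfl⟩)
  have hsupp' : (map (Int.castRingHom ℂ) g₀).support = g₀.support :=
    support_map_of_injective g₀ (Int.castRingHom ℂ).injective_int
  have hwt : IsWeightedHomogeneous sliceWeight (map (Int.castRingHom ℂ) g₀) 1 := fun μ hμ =>
    hgwt (mem_support_iff.mp (hsupp (hsupp' ▸ mem_support_iff.mpr hμ)))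
  have hne : map (Int.castRingHom ℂ) g₀ ≠ 0 := fun h0 =>
    hg₀ (support_eq_empty.mp (by rw [← hsupp', h0, support_zero]))
  refine ⟨_, hne,
    (isHomogeneous_of_isWeightedHomogeneous_sliceWeight (by omega) hwt).totalDegree hne,
    fun T hT => ?_, ⟨g₀, rfl, hgcd⟩, fun k j μ hμ => ?_⟩
  · obtain ⟨S, θ, rfl⟩ := partRankLE_iff_exists_genericTensor.mp hT
    exact hvan₀ S θ
  · rw [← weight_sliceWeight_apply]
    exact congrFun (congrFun (hwt (mem_support_iff.mp hμ)) k) j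

/-- Lemma 2.1: if some nonzero complex polynomial of degree `m` vanishes on all
tensors of partition rank at most `r`, then there is one, in variables indexed by
`[m]^d`, which is nonzero of degree `m`, vanishes on all tensors in
`ℂ^m ⊗ ⋯ ⊗ ℂ^m` of partition rank at most `r`, has integer coefficients of gcd `1`,
and has weight `(1^m, …, 1^m)`: for each direction `k` and each index value `j`,
every monomial has total degree exactly `1` in the variables whose `k`-th index
is `j`. -/
theorem normalised_vanishing_polynomial
    (d r m : ℕ) (hd : 2 ≤ d) (hr : 1 ≤ r) (hm : 1 ≤ m)
    (hpoly : ∃ (n : Fin d → ℕ) (_ : ∀ i, 1 ≤ n i)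
      (f : MvPolynomial (∀ i, Fin (n i)) ℂ), f ≠ 0 ∧ f.totalDegree = m ∧
        ∀ T : (∀ i, Fin (n i)) → ℂ, PartRankLE T r → MvPolynomial.eval T f = 0) :
    ∃ g : MvPolynomial (Fin d → Fin m) ℂ,
      g ≠ 0 ∧ g.totalDegree = m ∧
      (∀ T : (Fin d → Fin m) → ℂ, PartRankLE (n := fun _ => m) T r →
        MvPolynomial.eval T g = 0) ∧
      (∃ g₀ : MvPolynomial (Fin d → Fin m) ℤ,
        g = MvPolynomial.map (Int.castRingHom ℂ) g₀ ∧
        Finset.gcd g₀.support (fun μ => g₀.coeff μ) = 1) ∧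
      (∀ (k : Fin d) (j : Fin m), ∀ μ ∈ g.support,
        ∑ v ∈ Finset.univ.filter (fun v : Fin d → Fin m => v k = j), μ v = 1) :=
  normalised_vanishing_polynomial_general d r m hd hpoly
end

section
/- Let n ≥ 1. Consider the action of the group G := SL_n(ℂ) × SL_n(ℂ) × SL_n(ℂ) on ℂ^n ⊗ ℂ^n ⊗ ℂ^n determined by (g_1, g_2, g_3)·(u ⊗ v ⊗ w) = (g_1 u) ⊗ (g_2 v) ⊗ (g_3 w). If T ∈ ℂ^n ⊗ ℂ^n ⊗ ℂ^n has slice rank strictly less than n, then every G-invariant polynomial function f on ℂ^n ⊗ ℂ^n ⊗ ℂ^n with f(0) = 0 satisfies f(T) = 0; that is, T lies in the nullcone of the G-action. -/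
open scoped BigOperators

/-- `T` is a single term of a slice rank decomposition: a vector in one of the three
positions tensored with an order-2 tensor in the other two positions. -/
def IsSliceTerm {K : Type*} [Field K] {n : ℕ} (T : Fin n → Fin n → Fin n → K) : Prop :=
  (∃ (v : Fin n → K) (M : Fin n → Fin n → K), ∀ a b c, T a b c = v a * M b c) ∨
  (∃ (v : Fin n → K) (M : Fin n → Fin n → K), ∀ a b c, T a b c = v b * M a c) ∨
  (∃ (v : Fin n → K) (M : Fin n → Fin n → K), ∀ a b c, T a b c = v c * M a b)

/-- The slice rank of `T` is at most `r`. -/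
def SliceRankLE {K : Type*} [Field K] {n : ℕ}
    (T : Fin n → Fin n → Fin n → K) (r : ℕ) : Prop :=
  ∃ c : Fin r → (Fin n → Fin n → Fin n → K),
    (∀ j, IsSliceTerm (c j)) ∧ ∀ a b c', T a b c' = ∑ j, c j a b c'

/-- The factorwise action of a triple of `n × n` matrices on an order-3 tensor,
determined by `(g₁, g₂, g₃) · (u ⊗ v ⊗ w) = (g₁ u) ⊗ (g₂ v) ⊗ (g₃ w)`. -/
noncomputable def act3 {n : ℕ} (g₁ g₂ g₃ : Matrix (Fin n) (Fin n) ℂ)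
    (T : Fin n → Fin n → Fin n → ℂ) : Fin n → Fin n → Fin n → ℂ :=
  fun a b c => ∑ a', ∑ b', ∑ c', g₁ a a' * g₂ b b' * g₃ c c' * T a' b' c'

/-! The vectors of the slice terms of `T` that sit in position `i` span a subspace `Vᵢ`, and
`dim V₁ + dim V₂ + dim V₃ ≤ r < n`. Choose complements `Wᵢ` and let `t` act in factor `i` by
`t ^ (n - dim Vᵢ)` on `Vᵢ` and by `t ^ (-dim Vᵢ)` on `Wᵢ`; this lies in `SL_n`. Each slice term
has a factor in some `Vᵢ`, so it is scaled by `t ^ (n - dim V₁ - dim V₂ - dim V₃)` times something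
polynomial in `t`, and the orbit of `T` tends to `0` as `t → 0`. An invariant polynomial is
constant on the orbit and continuous, so `f T = f 0 = 0`. -/

open Module Submodule Filter Topology Matrix

section WeightMap

variable {K E : Type*} [Field K] [AddCommGroup E] [Module K E] {V W : Submodule K E}

noncomputable def weightMap (h : IsCompl V W) (a b : K) : Module.End K E :=
  a • V.projection W h + b • W.projection V h.symm

lemma weightMap_apply_of_mem_left (h : IsCompl V W) (a b : K) {v : E} (hv : v ∈ V) :
    weightMap h a b v = a • v := by
  simp [weightMap, projection_apply_of_mem_left h hv, projection_apply_of_mem_right h.symm hv]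

lemma weightMap_eq_conj (h : IsCompl V W) (a b : K) :
    weightMap h a b =
      (V.prodEquivOfIsCompl W h).conj ((a • LinearMap.id).prodMap (b • LinearMap.id)) := by
  ext x
  simp [weightMap, LinearEquiv.conj_apply]

lemma det_weightMap [FiniteDimensional K E] (h : IsCompl V W) (a b : K) :
    LinearMap.det (weightMap h a b) = a ^ finrank K V * b ^ finrank K W := by
  rw [weightMap_eq_conj, LinearEquiv.conj_apply, LinearMap.comp_assoc, LinearMap.det_conj,
    LinearMap.det_prodMap, LinearMap.det_smul, LinearMap.det_smul, LinearMap.det_id,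
    LinearMap.det_id, mul_one, mul_one]

end WeightMap

section OneParameterSubgroup

variable {K : Type*} [Field K] {n : ℕ} {V W : Submodule K (Fin n → K)}

noncomputable def stretch (h : IsCompl V W) (t : K) : Matrix (Fin n) (Fin n) K :=
  LinearMap.toMatrix' (weightMap h (t ^ n) 1)

lemma stretch_mulVec_of_mem (h : IsCompl V W) (t : K) {v : Fin n → K} (hv : v ∈ V) :
    stretch h t *ᵥ v = t ^ n • v := by
  rw [stretch, LinearMap.toMatrix'_mulVec, weightMap_apply_of_mem_left h _ _ hv]

lemma stretch_mulVec_eq_smul_one_mulVec (h : IsCompl V W) (t : K) {v : Fin n → K}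
    (hv : v ∈ V) : stretch h t *ᵥ v = (t ^ n • 1 : Matrix (Fin n) (Fin n) K) *ᵥ v := by
  rw [stretch_mulVec_of_mem h t hv, Matrix.smul_mulVec, Matrix.one_mulVec]

lemma continuous_stretch [TopologicalSpace K] [IsTopologicalRing K] (h : IsCompl V W) :
    Continuous (stretch h) := by
  have hstretch : stretch h = fun t => t ^ n • LinearMap.toMatrix' (V.projection W h) +
      LinearMap.toMatrix' (W.projection V h.symm) := by
    ext1 t
    simp [stretch, weightMap]
  rw [hstretch]
  fun_prop

noncomputable def oneParam (h : IsCompl V W) (t : K) : Matrix (Fin n) (Fin n) K :=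
  t⁻¹ ^ finrank K V • stretch h t

lemma det_oneParam (h : IsCompl V W) {t : K} (ht : t ≠ 0) : (oneParam h t).det = 1 := by
  rw [oneParam, Matrix.det_smul, stretch, LinearMap.det_toMatrix', det_weightMap, one_pow,
    mul_one, Fintype.card_fin, ← pow_mul, ← pow_mul, mul_comm (finrank K V) n, ← mul_pow,
    inv_mul_cancel₀ ht, one_pow]

end OneParameterSubgroup

section SliceDecomposition

variable {K : Type*} [Field K] {n : ℕ}

def fiberSubmodule₁ (V : Submodule K (Fin n → K)) : Submodule K (Fin n → Fin n → Fin n → K) where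
  carrier := {T | ∀ b c, (fun a => T a b c) ∈ V}
  add_mem' hS hT b c := V.add_mem (hS b c) (hT b c)
  zero_mem' _ _ := V.zero_mem
  smul_mem' x _ hT b c := V.smul_mem x (hT b c)

def fiberSubmodule₂ (V : Submodule K (Fin n → K)) : Submodule K (Fin n → Fin n → Fin n → K) where
  carrier := {T | ∀ a c, (fun b => T a b c) ∈ V}
  add_mem' hS hT a c := V.add_mem (hS a c) (hT a c)
  zero_mem' _ _ := V.zero_mem
  smul_mem' x _ hT a c := V.smul_mem x (hT a c)

def fiberSubmodule₃ (V : Submodule K (Fin n → K)) : Submodule K (Fin n → Fin n → Fin n → K) where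
  carrier := {T | ∀ a b, (fun c => T a b c) ∈ V}
  add_mem' hS hT a b := V.add_mem (hS a b) (hT a b)
  zero_mem' _ _ := V.zero_mem
  smul_mem' x _ hT a b := V.smul_mem x (hT a b)

/-- The sums of slice terms whose vectors in positions 1, 2, 3 are taken from `V₁`, `V₂`, `V₃`. -/
def sliceSubmodule (V₁ V₂ V₃ : Submodule K (Fin n → K)) :
    Submodule K (Fin n → Fin n → Fin n → K) :=
  fiberSubmodule₁ V₁ ⊔ fiberSubmodule₂ V₂ ⊔ fiberSubmodule₃ V₃

lemma sliceSubmodule_mono {V₁ V₂ V₃ V₁' V₂' V₃' : Submodule K (Fin n → K)}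
    (h₁ : V₁ ≤ V₁') (h₂ : V₂ ≤ V₂') (h₃ : V₃ ≤ V₃') :
    sliceSubmodule V₁ V₂ V₃ ≤ sliceSubmodule V₁' V₂' V₃' := by
  refine sup_le_sup (sup_le_sup ?_ ?_) ?_
  · exact fun T hT b c => h₁ (hT b c)
  · exact fun T hT a c => h₂ (hT a c)
  · exact fun T hT a b => h₃ (hT a b)

lemma finrank_span_singleton_le_one {E : Type*} [AddCommGroup E] [Module K E] (v : E) :
    finrank K (K ∙ v) ≤ 1 :=
  (finrank_span_le_card ({v} : Set E)).trans (by simp)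

lemma IsSliceTerm.exists_mem_sliceSubmodule {T : Fin n → Fin n → Fin n → K} (hT : IsSliceTerm T) :
    ∃ V₁ V₂ V₃ : Submodule K (Fin n → K),
      finrank K V₁ + finrank K V₂ + finrank K V₃ ≤ 1 ∧ T ∈ sliceSubmodule V₁ V₂ V₃ := by
  rcases hT with ⟨v, M, hT⟩ | ⟨v, M, hT⟩ | ⟨v, M, hT⟩
  · refine ⟨K ∙ v, ⊥, ⊥, by simpa using finrank_span_singleton_le_one v,
      mem_sup_left (mem_sup_left fun b c => ?_)⟩
    exact mem_span_singleton.2 ⟨M b c, by ext; simp [hT, mul_comm]⟩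
  · refine ⟨⊥, K ∙ v, ⊥, by simpa using finrank_span_singleton_le_one v,
      mem_sup_left (mem_sup_right fun a c => ?_)⟩
    exact mem_span_singleton.2 ⟨M a c, by ext; simp [hT, mul_comm]⟩
  · refine ⟨⊥, ⊥, K ∙ v, by simpa using finrank_span_singleton_le_one v,
      mem_sup_right fun a b => ?_⟩
    exact mem_span_singleton.2 ⟨M a b, by ext; simp [hT, mul_comm]⟩

lemma SliceRankLE.exists_mem_sliceSubmodule {T : Fin n → Fin n → Fin n → K} {r : ℕ}
    (hT : SliceRankLE T r) :
    ∃ V₁ V₂ V₃ : Submodule K (Fin n → K),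
      finrank K V₁ + finrank K V₂ + finrank K V₃ ≤ r ∧ T ∈ sliceSubmodule V₁ V₂ V₃ := by
  induction r generalizing T with
  | zero =>
    obtain ⟨c, -, hsum⟩ := hT
    have hT0 : T = 0 := by ext a b c'; simp [hsum]
    exact ⟨⊥, ⊥, ⊥, by simp, hT0 ▸ zero_mem _⟩
  | succ r ih =>
    obtain ⟨c, hc, hsum⟩ := hT
    obtain ⟨V₁, V₂, V₃, hdim, hmem⟩ :=
      ih (T := fun a b c' => ∑ j : Fin r, c j.castSucc a b c') ⟨_, fun j => hc _, fun _ _ _ => rfl⟩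
    obtain ⟨V₁', V₂', V₃', hdim', hmem'⟩ := (hc (Fin.last r)).exists_mem_sliceSubmodule
    refine ⟨V₁ ⊔ V₁', V₂ ⊔ V₂', V₃ ⊔ V₃', ?_, ?_⟩
    · have := finrank_add_le_finrank_add_finrank V₁ V₁'
      have := finrank_add_le_finrank_add_finrank V₂ V₂'
      have := finrank_add_le_finrank_add_finrank V₃ V₃'
      omega
    · have hT : T = (fun a b c' => ∑ j : Fin r, c j.castSucc a b c') + c (Fin.last r) := by
        ext a b c'
        simp [hsum, Fin.sum_univ_castSucc]
      rw [hT]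
      exact add_mem (sliceSubmodule_mono le_sup_left le_sup_left le_sup_left hmem)
        (sliceSubmodule_mono le_sup_right le_sup_right le_sup_right hmem')

end SliceDecomposition

section Act3

variable {n : ℕ} {g₁ g₂ g₃ g₁' g₂' g₃' : Matrix (Fin n) (Fin n) ℂ} {S T : Fin n → Fin n → Fin n → ℂ}

lemma act3_add : act3 g₁ g₂ g₃ (S + T) = act3 g₁ g₂ g₃ S + act3 g₁ g₂ g₃ T := by
  ext a b c
  simp [act3, mul_add, Finset.sum_add_distrib]

lemma act3_smul₁ (x : ℂ) : act3 (x • g₁) g₂ g₃ T = x • act3 g₁ g₂ g₃ T := by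
  ext a b c
  simp [act3, Finset.mul_sum, mul_assoc]

lemma act3_smul₂ (x : ℂ) : act3 g₁ (x • g₂) g₃ T = x • act3 g₁ g₂ g₃ T := by
  ext a b c
  simp [act3, Finset.mul_sum, mul_assoc, mul_left_comm]

lemma act3_smul₃ (x : ℂ) : act3 g₁ g₂ (x • g₃) T = x • act3 g₁ g₂ g₃ T := by
  ext a b c
  simp [act3, Finset.mul_sum, mul_assoc, mul_left_comm]

lemma act3_apply_eq_sum_mulVec₁ (a b c : Fin n) :
    act3 g₁ g₂ g₃ T a b c = ∑ b', ∑ c', g₂ b b' * g₃ c c' * (g₁ *ᵥ fun a' => T a' b' c') a := by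
  simp only [act3, Matrix.mulVec, dotProduct, Finset.mul_sum]
  rw [Finset.sum_comm]
  refine Finset.sum_congr rfl fun _ _ => ?_
  rw [Finset.sum_comm]
  refine Finset.sum_congr rfl fun _ _ => Finset.sum_congr rfl fun _ _ => by ring

lemma act3_apply_eq_sum_mulVec₂ (a b c : Fin n) :
    act3 g₁ g₂ g₃ T a b c = ∑ a', ∑ c', g₁ a a' * g₃ c c' * (g₂ *ᵥ fun b' => T a' b' c') b := by
  simp only [act3, Matrix.mulVec, dotProduct, Finset.mul_sum]
  refine Finset.sum_congr rfl fun _ _ => ?_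
  rw [Finset.sum_comm]
  refine Finset.sum_congr rfl fun _ _ => Finset.sum_congr rfl fun _ _ => by ring

lemma act3_apply_eq_sum_mulVec₃ (a b c : Fin n) :
    act3 g₁ g₂ g₃ T a b c = ∑ a', ∑ b', g₁ a a' * g₂ b b' * (g₃ *ᵥ fun c' => T a' b' c') c := by
  simp only [act3, Matrix.mulVec, dotProduct, Finset.mul_sum]
  refine Finset.sum_congr rfl fun _ _ => Finset.sum_congr rfl fun _ _ =>
    Finset.sum_congr rfl fun _ _ => by ring

lemma act3_congr_of_mem_fiberSubmodule₁ {V : Submodule ℂ (Fin n → ℂ)}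
    (hT : T ∈ fiberSubmodule₁ V) (hg : ∀ v ∈ V, g₁ *ᵥ v = g₁' *ᵥ v) :
    act3 g₁ g₂ g₃ T = act3 g₁' g₂ g₃ T := by
  ext a b c
  simp only [act3_apply_eq_sum_mulVec₁, hg _ (hT _ _)]

lemma act3_congr_of_mem_fiberSubmodule₂ {V : Submodule ℂ (Fin n → ℂ)}
    (hT : T ∈ fiberSubmodule₂ V) (hg : ∀ v ∈ V, g₂ *ᵥ v = g₂' *ᵥ v) :
    act3 g₁ g₂ g₃ T = act3 g₁ g₂' g₃ T := by
  ext a b c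
  simp only [act3_apply_eq_sum_mulVec₂, hg _ (hT _ _)]

lemma act3_congr_of_mem_fiberSubmodule₃ {V : Submodule ℂ (Fin n → ℂ)}
    (hT : T ∈ fiberSubmodule₃ V) (hg : ∀ v ∈ V, g₃ *ᵥ v = g₃' *ᵥ v) :
    act3 g₁ g₂ g₃ T = act3 g₁ g₂ g₃' T := by
  ext a b c
  simp only [act3_apply_eq_sum_mulVec₃, hg _ (hT _ _)]

lemma Continuous.act3 {X : Type*} [TopologicalSpace X] {A₁ A₂ A₃ : X → Matrix (Fin n) (Fin n) ℂ}
    (h₁ : Continuous A₁) (h₂ : Continuous A₂) (h₃ : Continuous A₃)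
    (T : Fin n → Fin n → Fin n → ℂ) :
    Continuous fun x => act3 (A₁ x) (A₂ x) (A₃ x) T := by
  refine continuous_pi fun a => continuous_pi fun b => continuous_pi fun c => ?_
  unfold _root_.act3
  fun_prop

end Act3

section Nullcone

variable {n : ℕ} {V₁ V₂ V₃ W₁ W₂ W₃ : Submodule ℂ (Fin n → ℂ)}

lemma act3_stretch_eq_smul (h₁ : IsCompl V₁ W₁) (h₂ : IsCompl V₂ W₂) (h₃ : IsCompl V₃ W₃)
    {T₁ T₂ T₃ : Fin n → Fin n → Fin n → ℂ} (hT₁ : T₁ ∈ fiberSubmodule₁ V₁)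
    (hT₂ : T₂ ∈ fiberSubmodule₂ V₂) (hT₃ : T₃ ∈ fiberSubmodule₃ V₃) (t : ℂ) :
    act3 (stretch h₁ t) (stretch h₂ t) (stretch h₃ t) (T₁ + T₂ + T₃) =
      t ^ n • (act3 1 (stretch h₂ t) (stretch h₃ t) T₁ + act3 (stretch h₁ t) 1 (stretch h₃ t) T₂ +
        act3 (stretch h₁ t) (stretch h₂ t) 1 T₃) := by
  rw [act3_add, act3_add,
    act3_congr_of_mem_fiberSubmodule₁ hT₁ fun _ hv => stretch_mulVec_eq_smul_one_mulVec h₁ t hv,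
    act3_congr_of_mem_fiberSubmodule₂ hT₂ fun _ hv => stretch_mulVec_eq_smul_one_mulVec h₂ t hv,
    act3_congr_of_mem_fiberSubmodule₃ hT₃ fun _ hv => stretch_mulVec_eq_smul_one_mulVec h₃ t hv,
    act3_smul₁, act3_smul₂, act3_smul₃, smul_add, smul_add]

lemma tendsto_act3_oneParam (h₁ : IsCompl V₁ W₁) (h₂ : IsCompl V₂ W₂) (h₃ : IsCompl V₃ W₃)
    (hdim : finrank ℂ V₁ + finrank ℂ V₂ + finrank ℂ V₃ < n) {T : Fin n → Fin n → Fin n → ℂ}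
    (hT : T ∈ sliceSubmodule V₁ V₂ V₃) :
    Tendsto (fun t => act3 (oneParam h₁ t) (oneParam h₂ t) (oneParam h₃ t) T) (𝓝[≠] 0) (𝓝 0) := by
  set D := finrank ℂ V₁ + finrank ℂ V₂ + finrank ℂ V₃
  obtain ⟨T₁₂, hT₁₂, T₃, hT₃, rfl⟩ := mem_sup.1 hT
  obtain ⟨T₁, hT₁, T₂, hT₂, rfl⟩ := mem_sup.1 hT₁₂
  set R := fun t => act3 1 (stretch h₂ t) (stretch h₃ t) T₁ +
    act3 (stretch h₁ t) 1 (stretch h₃ t) T₂ + act3 (stretch h₁ t) (stretch h₂ t) 1 T₃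
  have hR : Continuous R :=
    ((continuous_const.act3 (continuous_stretch h₂) (continuous_stretch h₃) T₁).add
      ((continuous_stretch h₁).act3 continuous_const (continuous_stretch h₃) T₂)).add
      ((continuous_stretch h₁).act3 (continuous_stretch h₂) continuous_const T₃)
  have heq : ∀ t ≠ (0 : ℂ), act3 (oneParam h₁ t) (oneParam h₂ t) (oneParam h₃ t) (T₁ + T₂ + T₃) =
      t ^ (n - D) • R t := by
    intro t ht
    rw [oneParam, oneParam, oneParam, act3_smul₁, act3_smul₂, act3_smul₃,
      act3_stretch_eq_smul h₁ h₂ h₃ hT₁ hT₂ hT₃, smul_smul, smul_smul, smul_smul,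
      pow_sub₀ _ ht hdim.le, pow_add, pow_add, inv_pow, inv_pow, inv_pow]
    congr 1
    field_simp
  have hlim : Tendsto (fun t : ℂ => t ^ (n - D) • R t) (𝓝 0) (𝓝 0) := by
    have hcont : Continuous fun t : ℂ => t ^ (n - D) • R t := by fun_prop
    exact hcont.tendsto' 0 0 (by simp [zero_pow (Nat.sub_ne_zero_of_lt hdim)])
  exact (hlim.mono_left nhdsWithin_le_nhds).congr'
    (eventually_nhdsWithin_of_forall fun t ht => (heq t ht).symm)

end Nullcone

theorem low_slice_rank_in_nullcone_general (n : ℕ)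
    (T : Fin n → Fin n → Fin n → ℂ)
    (hT : ∃ r, r < n ∧ SliceRankLE T r)
    (f : MvPolynomial (Fin n × Fin n × Fin n) ℂ)
    (hinv : ∀ (g₁ g₂ g₃ : Matrix.SpecialLinearGroup (Fin n) ℂ)
      (S : Fin n → Fin n → Fin n → ℂ),
      MvPolynomial.eval
          (fun p => act3 (g₁ : Matrix (Fin n) (Fin n) ℂ) (g₂ : Matrix (Fin n) (Fin n) ℂ)
            (g₃ : Matrix (Fin n) (Fin n) ℂ) S p.1 p.2.1 p.2.2) f
        = MvPolynomial.eval (fun p => S p.1 p.2.1 p.2.2) f)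
    (hf0 : MvPolynomial.eval (fun _ => (0 : ℂ)) f = 0) :
    MvPolynomial.eval (fun p => T p.1 p.2.1 p.2.2) f = 0 := by
  obtain ⟨r, hrn, hT⟩ := hT
  obtain ⟨V₁, V₂, V₃, hdim, hmem⟩ := hT.exists_mem_sliceSubmodule
  obtain ⟨W₁, h₁⟩ := V₁.exists_isCompl
  obtain ⟨W₂, h₂⟩ := V₂.exists_isCompl
  obtain ⟨W₃, h₃⟩ := V₃.exists_isCompl
  set F : (Fin n → Fin n → Fin n → ℂ) → ℂ :=
    fun S => MvPolynomial.eval (fun p => S p.1 p.2.1 p.2.2) f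
  have hF : Continuous F := (MvPolynomial.continuous_eval f).comp (by fun_prop)
  have hlim := (hF.tendsto 0).comp (tendsto_act3_oneParam h₁ h₂ h₃ (hdim.trans_lt hrn) hmem)
  have hconst : (fun t => F (act3 (oneParam h₁ t) (oneParam h₂ t) (oneParam h₃ t) T))
      =ᶠ[𝓝[≠] 0] fun _ => F T :=
    eventually_nhdsWithin_of_forall fun t ht =>
      hinv ⟨_, det_oneParam h₁ ht⟩ ⟨_, det_oneParam h₂ ht⟩ ⟨_, det_oneParam h₃ ht⟩ T
  rw [← hf0]
  exact tendsto_nhds_unique (tendsto_const_nhds.congr' hconst.symm) hlim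

/-- Lemma 4.1: a tensor in `ℂ^n ⊗ ℂ^n ⊗ ℂ^n` of slice rank strictly less than `n`
lies in the nullcone of the action of `SL_n × SL_n × SL_n`: every invariant
polynomial vanishing at `0` vanishes on it. -/
theorem low_slice_rank_in_nullcone (n : ℕ) (hn : 1 ≤ n)
    (T : Fin n → Fin n → Fin n → ℂ)
    (hT : ∃ r, r < n ∧ SliceRankLE T r)
    (f : MvPolynomial (Fin n × Fin n × Fin n) ℂ)
    (hinv : ∀ (g₁ g₂ g₃ : Matrix.SpecialLinearGroup (Fin n) ℂ)
      (S : Fin n → Fin n → Fin n → ℂ),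
      MvPolynomial.eval
          (fun p => act3 (g₁ : Matrix (Fin n) (Fin n) ℂ) (g₂ : Matrix (Fin n) (Fin n) ℂ)
            (g₃ : Matrix (Fin n) (Fin n) ℂ) S p.1 p.2.1 p.2.2) f
        = MvPolynomial.eval (fun p => S p.1 p.2.1 p.2.2) f)
    (hf0 : MvPolynomial.eval (fun _ => (0 : ℂ)) f = 0) :
    MvPolynomial.eval (fun p => T p.1 p.2.1 p.2.2) f = 0 :=
  low_slice_rank_in_nullcone_general n T hT f hinv hf0
end

section
/- Let d ≥ 2, r ≥ 1, n ≥ 1 be integers and let f be a polynomial with integer coefficients in the variables x_{i_1,…,i_d} (i_1, …, i_d ∈ [n]) such that f vanishes on every tensor in ℂ^n ⊗ ⋯ ⊗ ℂ^n of partition rank at most r. Then for every field K, the image of f under the coefficient reduction ℤ → K vanishes on every tensor in K^n ⊗ ⋯ ⊗ K^n of partition rank at most r. -/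
open scoped BigOperators

/-!
Tensors of partition rank at most `r` whose `j`-th term splits off a fixed set `I j` of
coordinates are the image of a polynomial map with integer coefficients, in the entries of the
factors `A_j` and `B_j`. Pulling `f` back along this map gives an integer polynomial that vanishes
at every complex point, hence is zero because `ℤ ⊆ ℂ` and `ℂ` is infinite; so it vanishes at
every point over `K` as well, i.e. `f` vanishes on the image over `K`.
-/

open MvPolynomial

namespace MvPolynomial

theorem eval_map_intCastRingHom {σ L : Type*} [CommRing L] (v : σ → L)
    (p : MvPolynomial σ ℤ) : eval v (map (Int.castRingHom L) p) = aeval v p := by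
  rw [eval_map, aeval_def, algebraMap_int_eq]

theorem eq_zero_of_forall_aeval_eq_zero {σ R L : Type*} [CommRing R] [CommRing L] [IsDomain L]
    [Infinite L] [Algebra R L] [FaithfulSMul R L] {p : MvPolynomial σ R}
    (h : ∀ v : σ → L, aeval v p = 0) : p = 0 := by
  apply map_injective _ (FaithfulSMul.algebraMap_injective R L)
  refine MvPolynomial.funext fun v => ?_
  rw [map_zero, map_zero, eval_map, ← aeval_def, h]

end MvPolynomial

section GenericPartitionTensor

variable {d r : ℕ} (n : Fin d → ℕ) (I : Fin r → Finset (Fin d))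

/-- The entries of the factors `A_j` (left summand) and `B_j` (right summand) of the `j`-th term
of a decomposition whose `j`-th term splits off the coordinates `I j`. -/
abbrev PartitionFactorEntry : Type :=
  Σ j : Fin r, (∀ i : {i // i ∈ I j}, Fin (n i)) ⊕ (∀ i : {i // i ∉ I j}, Fin (n i))

noncomputable def genericPartitionTensor (x : ∀ i, Fin (n i)) :
    MvPolynomial (PartitionFactorEntry n I) ℤ :=
  ∑ j, X ⟨j, .inl fun i => x i⟩ * X ⟨j, .inr fun i => x i⟩

variable {n I}

@[simp]
theorem aeval_genericPartitionTensor {L : Type*} [CommRing L] (v : PartitionFactorEntry n I → L)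
    (x : ∀ i, Fin (n i)) :
    aeval v (genericPartitionTensor n I x) =
      ∑ j, v ⟨j, .inl fun i => x i⟩ * v ⟨j, .inr fun i => x i⟩ := by
  simp [genericPartitionTensor]

theorem partRankLE_aeval_genericPartitionTensor {K : Type*} [Field K]
    (hI : ∀ j, (I j).Nonempty ∧ I j ≠ Finset.univ) (v : PartitionFactorEntry n I → K) :
    PartRankLE (fun x => aeval v (genericPartitionTensor n I x)) r := by
  refine ⟨fun j x => v ⟨j, .inl fun i => x i⟩ * v ⟨j, .inr fun i => x i⟩,
    fun j => ⟨I j, (hI j).1, (hI j).2, fun a => v ⟨j, .inl a⟩, fun b => v ⟨j, .inr b⟩,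
      fun _ => rfl⟩, ?_⟩
  ext x
  simp [Finset.sum_apply]

end GenericPartitionTensor

theorem PartRankLE.exists_eq_aeval_genericPartitionTensor {K : Type*} [Field K] {d r : ℕ}
    {n : Fin d → ℕ} {T : (∀ i, Fin (n i)) → K} (hT : PartRankLE T r) :
    ∃ I : Fin r → Finset (Fin d), (∀ j, (I j).Nonempty ∧ I j ≠ Finset.univ) ∧
      ∃ v : PartitionFactorEntry n I → K, T = fun x => aeval v (genericPartitionTensor n I x) := by
  obtain ⟨c, hc, rfl⟩ := hT
  choose I hIne hIuniv A B hAB using hc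
  refine ⟨I, fun j => ⟨hIne j, hIuniv j⟩, fun e => Sum.elim (A e.1) (B e.1) e.2, ?_⟩
  ext x
  simp [Finset.sum_apply, hAB]

theorem integer_polynomial_vanishes_over_any_field_general
    (d r n : ℕ)
    (f : MvPolynomial (Fin d → Fin n) ℤ)
    (hvan : ∀ T : (Fin d → Fin n) → ℂ, PartRankLE (n := fun _ => n) T r →
      MvPolynomial.eval T (MvPolynomial.map (Int.castRingHom ℂ) f) = 0)
    (K : Type*) [Field K] :
    ∀ T : (Fin d → Fin n) → K, PartRankLE (n := fun _ => n) T r →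
      MvPolynomial.eval T (MvPolynomial.map (Int.castRingHom K) f) = 0 := by
  intro T hT
  obtain ⟨I, hI, v, rfl⟩ := hT.exists_eq_aeval_genericPartitionTensor
  have hpullback : bind₁ (genericPartitionTensor _ I) f = 0 :=
    eq_zero_of_forall_aeval_eq_zero (L := ℂ) fun w => by
      rw [aeval_bind₁, ← eval_map_intCastRingHom]
      exact hvan _ (partRankLE_aeval_genericPartitionTensor hI w)
  rw [eval_map_intCastRingHom, ← aeval_bind₁, hpullback, map_zero]

/-- If a polynomial with integer coefficients vanishes on all complex tensors of
partition rank at most `r`, then over every field `K` its reduction vanishes on all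
tensors of partition rank at most `r`. -/
theorem integer_polynomial_vanishes_over_any_field
    (d r n : ℕ) (hd : 2 ≤ d) (hr : 1 ≤ r) (hn : 1 ≤ n)
    (f : MvPolynomial (Fin d → Fin n) ℤ)
    (hvan : ∀ T : (Fin d → Fin n) → ℂ, PartRankLE (n := fun _ => n) T r →
      MvPolynomial.eval T (MvPolynomial.map (Int.castRingHom ℂ) f) = 0)
    (K : Type*) [Field K] :
    ∀ T : (Fin d → Fin n) → K, PartRankLE (n := fun _ => n) T r →
      MvPolynomial.eval T (MvPolynomial.map (Int.castRingHom K) f) = 0 :=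
  integer_polynomial_vanishes_over_any_field_general d r n f hvan K
end

section
/- Let d ≥ 2 and r ≥ 1 be integers, set n := 2^{d+3} r, m := n^{2d}, and S := Σ_{∅ ≠ I ⊊ [d]} r·(n^{|I|} + n^{d−|I|}), where the sum is over all proper nonempty subsets I of [d]. Then C(2m + S − 1, 2m) < C(m + n^d − 1, m), where C(a,b) denotes the binomial coefficient. -/
open Finset

/-! With `N := n ^ d` one has `m = N²`, and every summand of `S` is at most `2 r n^(d-1)`, so
`4 S ≤ 2^(d+3) r n^(d-1) = N`. By symmetry the left side is `C(2N² + S - 1, S - 1) ≤ (N³)^(S-1)`,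
while the right side is `C(N² + N - 1, N - 1) ≥ C(N (N - 1), N - 1) ≥ N^(N-1)`; and
`3 (S - 1) < N - 1`. -/

lemma mul_choose_le_add_choose_succ (M a k : ℕ) : a * M.choose k ≤ (M + a).choose (k + 1) := by
  rw [Nat.add_choose_eq]
  have hmem : (k, 1) ∈ antidiagonal (k + 1) := by simp
  calc a * M.choose k = M.choose (k, 1).1 * a.choose (k, 1).2 := by simp [mul_comm]
    _ ≤ _ := single_le_sum (f := fun ij => M.choose ij.1 * a.choose ij.2)
        (fun _ _ => Nat.zero_le _) hmem

lemma pow_le_choose_mul (a k : ℕ) : a ^ k ≤ (a * k).choose k := by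
  induction k with
  | zero => simp
  | succ k ih =>
    calc a ^ (k + 1) = a * a ^ k := pow_succ' a k
      _ ≤ a * (a * k).choose k := Nat.mul_le_mul_left a ih
      _ ≤ (a * k + a).choose (k + 1) := mul_choose_le_add_choose_succ _ _ _
      _ = (a * (k + 1)).choose (k + 1) := by rw [mul_add_one]

lemma choose_add_sub_one_le_pow (a s : ℕ) : (a + s - 1).choose a ≤ (a + s - 1) ^ (s - 1) := by
  rcases s with _ | s
  · rcases a with _ | a <;> simp
  · rw [show a + (s + 1) - 1 = a + s by omega, Nat.add_sub_cancel, Nat.choose_symm_add]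
    exact Nat.choose_le_pow _ _

theorem choose_two_mul_sq_add_lt (N S : ℕ) (hN : 3 ≤ N) (hS : 3 * S ≤ N) :
    (2 * N ^ 2 + S - 1).choose (2 * N ^ 2) < (N ^ 2 + N - 1).choose (N ^ 2) := by
  have hcube : 2 * N ^ 2 + S - 1 ≤ N ^ 3 := by
    have : 3 * N ^ 2 ≤ N ^ 3 := by nlinarith
    have : N ≤ N ^ 2 := by nlinarith
    omega
  calc (2 * N ^ 2 + S - 1).choose (2 * N ^ 2)
      ≤ (2 * N ^ 2 + S - 1) ^ (S - 1) := choose_add_sub_one_le_pow _ _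
    _ ≤ (N ^ 3) ^ (S - 1) := Nat.pow_le_pow_left hcube _
    _ = N ^ (3 * (S - 1)) := (pow_mul N 3 (S - 1)).symm
    _ < N ^ (N - 1) := Nat.pow_lt_pow_right (by omega) (by omega)
    _ ≤ (N * (N - 1)).choose (N - 1) := pow_le_choose_mul _ _
    _ ≤ (N ^ 2 + N - 1).choose (N - 1) := Nat.choose_le_choose _ (by
        rw [Nat.mul_sub_one, sq]; omega)
    _ = (N ^ 2 + N - 1).choose (N ^ 2) := Nat.choose_symm_of_eq_add (by omega)

lemma sum_properNonempty_le (d r n : ℕ) (hn : 1 ≤ n) :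
    ∑ I ∈ univ.filter (fun I : Finset (Fin d) => I.Nonempty ∧ I ≠ univ),
      r * (n ^ I.card + n ^ (d - I.card)) ≤ 2 ^ d * (2 * r * n ^ (d - 1)) := by
  calc _ ≤ #(univ.filter (fun I : Finset (Fin d) => I.Nonempty ∧ I ≠ univ)) •
        (2 * r * n ^ (d - 1)) := by
        refine sum_le_card_nsmul _ _ _ fun I hI => ?_
        obtain ⟨hne, hproper⟩ := (mem_filter.mp hI).2
        have hpos : 1 ≤ #I := card_pos.mpr hne
        have hlt : #I < d := by simpa using card_lt_card (ssubset_univ_iff.mpr hproper)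
        have h₁ : n ^ #I ≤ n ^ (d - 1) := Nat.pow_le_pow_right hn (by omega)
        have h₂ : n ^ (d - #I) ≤ n ^ (d - 1) := Nat.pow_le_pow_right hn (by omega)
        calc r * (n ^ #I + n ^ (d - #I)) ≤ r * (n ^ (d - 1) + n ^ (d - 1)) := by gcongr
          _ = 2 * r * n ^ (d - 1) := by ring
    _ ≤ 2 ^ d * (2 * r * n ^ (d - 1)) := by
        rw [smul_eq_mul]
        gcongr
        simpa using card_filter_le (univ : Finset (Finset (Fin d))) _

/-- The dimension count in the proof of Theorem 3.1: with `n = 2^(d+3) r`,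
`m = n^(2d)` and `S = ∑_{∅ ≠ I ⊊ [d]} r (n^|I| + n^(d-|I|))`, the dimension
`C(2m+S-1, 2m)` of degree-`2m` homogeneous polynomials in `S` variables is strictly
smaller than the dimension `C(m+n^d-1, m)` of degree-`m` homogeneous polynomials in
`n^d` variables. -/
theorem dimension_count (d r : ℕ) (hd : 2 ≤ d) (hr : 1 ≤ r)
    (n m S : ℕ) (hn : n = 2 ^ (d + 3) * r) (hm : m = n ^ (2 * d))
    (hS : S = ∑ I ∈ Finset.univ.filter
        (fun I : Finset (Fin d) => I.Nonempty ∧ I ≠ Finset.univ),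
      r * (n ^ I.card + n ^ (d - I.card))) :
    Nat.choose (2 * m + S - 1) (2 * m) < Nat.choose (m + n ^ d - 1) m := by
  have h8n : 8 ≤ n := by
    have := Nat.one_le_two_pow (n := d)
    rw [hn, pow_add]
    nlinarith
  have hnN : n ≤ n ^ d := Nat.le_self_pow (by omega) n
  have hSN : 4 * S ≤ n ^ d :=
    calc 4 * S ≤ 4 * (2 ^ d * (2 * r * n ^ (d - 1))) := by
          rw [hS]; gcongr; exact sum_properNonempty_le d r n (by omega)
      _ = 2 ^ (d + 3) * r * n ^ (d - 1) := by ring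
      _ = n ^ d := by rw [← hn, ← pow_succ', Nat.sub_add_cancel (by omega)]
  rw [hm, pow_mul']
  exact choose_two_mul_sq_add_lt (n ^ d) S (by omega) (by omega)
end
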